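/- Fix integers j ≥ 1 and r ≥ 1 with j + r + 1 ≤ n and let B = {j+1, …, j+r}. Suppose the eigengap assumption holds: φ_j < φ_{j+1}, φ_{j+r} < φ_{j+r+1}, ψ_j < ψ_{j+1} and ψ_{j+r} < ψ_{j+r+1}. Let p be a real polynomial; set a₂ = ψ_{j+1} and b₂ = ψ_{j+r}. Let δ₂ > 0 be a real number such that: (i) for every l ∈ {1,…,n} \ B, either p(φ_l) ≥ b₂ + δ₂ or p(φ_l) ≤ a₂ − δ₂; (ii) for every i ∈ B, a₂ − p(φᵢ) < δ₂ and p(φᵢ) − b₂ < δ₂. Let W_j = [w_{j+1}, …, w_{j+r}] ∈ 𝕍_{n,r} and V_j = [v_{j+1}, …, v_{j+r}] ∈ 𝕍_{n,r}. Then ‖W_j W_jᵀ (I − V_j V_jᵀ)‖₂ ≤ ‖p(Φ) − Ψ‖₂ / δ₂. -/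

import Mathlib

open Matrix

/-- The spectral norm (largest singular value) of a real matrix, as the operator norm of
the induced linear map between Euclidean spaces. -/
noncomputable def specNorm {m r : ℕ} (M : Matrix (Fin m) (Fin r) ℝ) : ℝ :=
  ‖LinearMap.toContinuousLinearMap (Matrix.toEuclideanLin M)‖

open scoped Matrix.Norms.L2Operator

lemma specNorm_eq {m r : ℕ} (M : Matrix (Fin m) (Fin r) ℝ) : specNorm M = ‖M‖ := rfl

section helpers
variable {m n m' n' : Type*} [Fintype m] [Fintype n] [Fintype m'] [Fintype n']
  [DecidableEq m] [DecidableEq n] [DecidableEq m'] [DecidableEq n']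

set_option linter.unusedSectionVars false

lemma norm_diagonal_le (d : n → ℝ) {c : ℝ} (hc0 : 0 ≤ c) (hc : ∀ i, |d i| ≤ c) :
    ‖Matrix.diagonal d‖ ≤ c := by
  rw [Matrix.l2_opNorm_def]
  refine ContinuousLinearMap.opNorm_le_bound _ hc0 fun x => ?_
  have h1 : (LinearEquiv.trans (Matrix.toEuclideanLin (𝕜 := ℝ) (m := n) (n := n))
      LinearMap.toContinuousLinearMap (Matrix.diagonal d)) x
      = (WithLp.equiv 2 (n → ℝ)).symm (Matrix.diagonal d *ᵥ (WithLp.equiv 2 (n → ℝ)) x) := rfl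
  rw [h1]
  rw [EuclideanSpace.norm_eq, EuclideanSpace.norm_eq]
  have h2 : ∀ i, ‖(WithLp.equiv 2 (n → ℝ)).symm (Matrix.diagonal d *ᵥ (WithLp.equiv 2 (n → ℝ)) x) i‖
      = |d i| * ‖x i‖ := by
    intro i
    have : ((WithLp.equiv 2 (n → ℝ)).symm (Matrix.diagonal d *ᵥ (WithLp.equiv 2 (n → ℝ)) x)) i
        = d i * x i := by
      simp [Matrix.mulVec_diagonal]
    rw [this, Real.norm_eq_abs, Real.norm_eq_abs, abs_mul]
  calc Real.sqrt (∑ i, ‖(WithLp.equiv 2 (n → ℝ)).symm (Matrix.diagonal d *ᵥ (WithLp.equiv 2 (n → ℝ)) x) i‖ ^ 2)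
      ≤ Real.sqrt (∑ i, c ^ 2 * ‖x i‖ ^ 2) := by
        apply Real.sqrt_le_sqrt
        apply Finset.sum_le_sum
        intro i _
        rw [h2 i, mul_pow]
        have h3 : (0:ℝ) ≤ ‖x i‖ ^ 2 := sq_nonneg _
        have h4 : |d i| ^ 2 ≤ c ^ 2 := by nlinarith [abs_nonneg (d i), hc i]
        exact mul_le_mul_of_nonneg_right h4 h3
    _ = c * Real.sqrt (∑ i, ‖x i‖ ^ 2) := by
        rw [← Finset.mul_sum, Real.sqrt_mul (sq_nonneg c), Real.sqrt_sq hc0]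

lemma norm_diagonal_ge (d : n → ℝ) (i : n) : |d i| ≤ ‖Matrix.diagonal d‖ := by
  have h := Matrix.l2_opNorm_mulVec (Matrix.diagonal d) (EuclideanSpace.single i (1:ℝ))
  have h1 : (Matrix.diagonal d *ᵥ (EuclideanSpace.single i (1:ℝ))) = Pi.single i (d i) := by
    funext k
    simp only [Matrix.mulVec_diagonal]
    rcases eq_or_ne k i with rfl | hk
    · simp [EuclideanSpace.single_apply]
    · simp [EuclideanSpace.single_apply, hk, Pi.single_eq_of_ne hk]
  rw [h1] at h
  have h2 : (EuclideanSpace.equiv n ℝ).symm (Pi.single i (d i)) = EuclideanSpace.single i (d i) := rfl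
  rw [h2, EuclideanSpace.norm_single, EuclideanSpace.norm_single] at h
  simpa using h

lemma norm_one_mat [Nonempty n] : ‖(1 : Matrix n n ℝ)‖ = 1 := by
  rw [Matrix.cstar_norm_def, _root_.map_one]
  exact ContinuousLinearMap.norm_id

lemma normT (A : Matrix m n ℝ) : ‖Aᵀ‖ = ‖A‖ := by
  rw [← Matrix.conjTranspose_eq_transpose_of_trivial, Matrix.l2_opNorm_conjTranspose]

lemma norm_orth {U : Matrix m n ℝ} (hU : Uᵀ * U = 1) [Nonempty n] : ‖U‖ = 1 := by
  have h := Matrix.l2_opNorm_conjTranspose_mul_self U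
  rw [Matrix.conjTranspose_eq_transpose_of_trivial, hU, norm_one_mat] at h
  rcases mul_self_eq_one_iff.mp h.symm with h1 | h1
  · exact h1
  · nlinarith [norm_nonneg U]

lemma norm_mul_orth {U : Matrix m n ℝ} {Vv : Matrix m' n' ℝ} (X : Matrix n n' ℝ)
    (hU : Uᵀ * U = 1) (hV : Vvᵀ * Vv = 1) [Nonempty n] [Nonempty n'] :
    ‖U * X * Vvᵀ‖ = ‖X‖ := by
  have hUn : ‖U‖ = 1 := norm_orth hU
  have hVn : ‖Vvᵀ‖ = 1 := by rw [normT]; exact norm_orth hV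
  apply le_antisymm
  · calc ‖U * X * Vvᵀ‖ ≤ ‖U * X‖ * ‖Vvᵀ‖ := Matrix.l2_opNorm_mul _ _
      _ ≤ (‖U‖ * ‖X‖) * ‖Vvᵀ‖ := by
          apply mul_le_mul_of_nonneg_right (Matrix.l2_opNorm_mul _ _) (norm_nonneg _)
      _ = ‖X‖ := by rw [hUn, hVn]; ring
  · have hX : X = Uᵀ * (U * X * Vvᵀ) * Vv := by
      calc X = (Uᵀ * U) * X * (Vvᵀ * Vv) := by
            rw [hU, hV, Matrix.one_mul, Matrix.mul_one]
        _ = Uᵀ * (U * X * Vvᵀ) * Vv := by simp only [Matrix.mul_assoc]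
    have hUtn : ‖Uᵀ‖ = 1 := by rw [normT]; exact hUn
    have hVvn : ‖Vv‖ = 1 := norm_orth hV
    calc ‖X‖ = ‖Uᵀ * (U * X * Vvᵀ) * Vv‖ := by rw [← hX]
      _ ≤ ‖Uᵀ * (U * X * Vvᵀ)‖ * ‖Vv‖ := Matrix.l2_opNorm_mul _ _
      _ ≤ (‖Uᵀ‖ * ‖U * X * Vvᵀ‖) * ‖Vv‖ := by
          apply mul_le_mul_of_nonneg_right (Matrix.l2_opNorm_mul _ _) (norm_nonneg _)
      _ = ‖U * X * Vvᵀ‖ := by rw [hUtn, hVvn]; ring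

lemma sq_norm_proj (X Y : Matrix n' m ℝ) (hX : Xᵀ * X = 1) (hY : Yᵀ * Y = 1)
    [Nonempty m] [Nonempty n'] :
    ‖(1 - X * Xᵀ) * (Y * Yᵀ)‖ * ‖(1 - X * Xᵀ) * (Y * Yᵀ)‖ = ‖1 - (Xᵀ * Y)ᵀ * (Xᵀ * Y)‖ := by
  have hX' : ∀ (Z : Matrix m n' ℝ), Xᵀ * (X * Z) = Z := by
    intro Z; rw [← Matrix.mul_assoc, hX, Matrix.one_mul]
  have hY' : ∀ (Z : Matrix m n' ℝ), Yᵀ * (Y * Z) = Z := by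
    intro Z; rw [← Matrix.mul_assoc, hY, Matrix.one_mul]
  have key : ((1 - X * Xᵀ) * (Y * Yᵀ))ᴴ * ((1 - X * Xᵀ) * (Y * Yᵀ))
      = Y * (1 - (Xᵀ * Y)ᵀ * (Xᵀ * Y)) * Yᵀ := by
    simp only [Matrix.conjTranspose_eq_transpose_of_trivial, Matrix.transpose_mul,
      Matrix.transpose_sub, Matrix.transpose_one, Matrix.transpose_transpose]
    simp only [Matrix.mul_sub, Matrix.sub_mul, Matrix.mul_one, Matrix.one_mul,
      Matrix.mul_assoc, hX', hY']
    abel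
  rw [← Matrix.l2_opNorm_conjTranspose_mul_self, key, norm_mul_orth _ hY hY]

lemma norm_hermitian_eigs [Nonempty n] {S : Matrix n n ℝ} (hS : S.IsHermitian) :
    ‖S‖ = Finset.univ.sup' Finset.univ_nonempty (fun i => |hS.eigenvalues i|) := by
  have hU := (Matrix.IsHermitian.eigenvectorUnitary hS).2
  rw [Unitary.mem_iff] at hU
  have hU1 : ((Matrix.IsHermitian.eigenvectorUnitary hS : Matrix n n ℝ))ᵀ *
      (Matrix.IsHermitian.eigenvectorUnitary hS : Matrix n n ℝ) = 1 := by
    have := hU.1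
    rwa [Matrix.star_eq_conjTranspose, Matrix.conjTranspose_eq_transpose_of_trivial] at this
  have hspec := Matrix.IsHermitian.spectral_theorem hS
  have hdiag : Matrix.diagonal ((RCLike.ofReal : ℝ → ℝ) ∘ hS.eigenvalues)
      = Matrix.diagonal hS.eigenvalues := by
    congr 1
  rw [Unitary.conjStarAlgAut_apply, hdiag] at hspec
  have hstar : (star (Matrix.IsHermitian.eigenvectorUnitary hS : Matrix n n ℝ))
      = (Matrix.IsHermitian.eigenvectorUnitary hS : Matrix n n ℝ)ᵀ := by
    rw [Matrix.star_eq_conjTranspose, Matrix.conjTranspose_eq_transpose_of_trivial]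
  rw [hstar] at hspec
  conv_lhs => rw [hspec]
  rw [norm_mul_orth _ hU1 hU1]
  apply le_antisymm
  · apply norm_diagonal_le
    · obtain ⟨i⟩ := ‹Nonempty n›
      exact le_trans (abs_nonneg (hS.eigenvalues i)) (Finset.le_sup' (fun i => |hS.eigenvalues i|) (Finset.mem_univ i))
    · intro i; exact Finset.le_sup' (fun i => |hS.eigenvalues i|) (Finset.mem_univ i)
  · apply Finset.sup'_le
    intro i _
    exact norm_diagonal_ge _ i

lemma det_smul_one_sub_eq {S : Matrix n n ℝ} (hS : S.IsHermitian) (x : ℝ) :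
    Matrix.det (x • (1 : Matrix n n ℝ) - S) = ∏ i, (x - hS.eigenvalues i) := by
  have hU := (Matrix.IsHermitian.eigenvectorUnitary hS).2
  rw [Unitary.mem_iff] at hU
  set U : Matrix n n ℝ := (Matrix.IsHermitian.eigenvectorUnitary hS : Matrix n n ℝ) with hUdef
  have hstar : star U = Uᵀ := by
    rw [Matrix.star_eq_conjTranspose, Matrix.conjTranspose_eq_transpose_of_trivial]
  have hU1 : Uᵀ * U = 1 := by rw [← hstar]; exact hU.1
  have hU2 : U * Uᵀ = 1 := by rw [← hstar]; exact hU.2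
  have hspec := Matrix.IsHermitian.spectral_theorem hS
  have hdiag : Matrix.diagonal ((RCLike.ofReal : ℝ → ℝ) ∘ hS.eigenvalues)
      = Matrix.diagonal hS.eigenvalues := by congr 1
  rw [Unitary.conjStarAlgAut_apply, hdiag, hstar] at hspec
  have hone : x • (1 : Matrix n n ℝ) = U * (x • (1 : Matrix n n ℝ)) * Uᵀ := by
    rw [Matrix.mul_smul, Matrix.smul_mul, Matrix.mul_one, hU2]
  have hfact : x • (1 : Matrix n n ℝ) - S
      = U * (x • (1 : Matrix n n ℝ) - Matrix.diagonal hS.eigenvalues) * Uᵀ := by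
    rw [Matrix.mul_sub, Matrix.sub_mul, ← hone]
    conv_lhs => rw [hspec]
  rw [hfact, Matrix.det_mul, Matrix.det_mul]
  have hdet1 : Matrix.det U * Matrix.det Uᵀ = 1 := by
    rw [← Matrix.det_mul, hU2, Matrix.det_one]
  have : x • (1 : Matrix n n ℝ) - Matrix.diagonal hS.eigenvalues
      = Matrix.diagonal (fun i => x - hS.eigenvalues i) := by
    ext i k
    by_cases h : i = k <;>
      simp [Matrix.diagonal_apply, h, Matrix.one_apply, Matrix.sub_apply, Matrix.smul_apply]
  rw [this, Matrix.det_diagonal]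
  rw [Matrix.det_transpose] at hdet1 ⊢
  linear_combination (∏ i, (x - hS.eigenvalues i)) * hdet1

lemma det_smul_add_comm (A B : Matrix n n ℝ) (c : ℝ) :
    Matrix.det (c • (1 : Matrix n n ℝ) + A * B) = Matrix.det (c • (1 : Matrix n n ℝ) + B * A) := by
  rcases eq_or_ne c 0 with rfl | hc
  · simp [Matrix.det_mul, mul_comm]
  · have key : ∀ X Y : Matrix n n ℝ,
        c • ((1 : Matrix n n ℝ) + c⁻¹ • (X * Y)) = c • (1 : Matrix n n ℝ) + X * Y := by
      intro X Y
      rw [smul_add, smul_smul, mul_inv_cancel₀ hc, one_smul]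
    rw [← key A B, ← key B A, Matrix.det_smul, Matrix.det_smul]
    congr 1
    have h1 : c⁻¹ • (A * B) = (c⁻¹ • A) * B := by rw [Matrix.smul_mul]
    have h2 : c⁻¹ • (B * A) = B * (c⁻¹ • A) := by rw [Matrix.mul_smul]
    rw [h1, h2, Matrix.det_one_add_mul_comm]

lemma norm_eq_of_det [Nonempty n] {S₁ S₂ : Matrix n n ℝ}
    (h₁ : S₁.IsHermitian) (h₂ : S₂.IsHermitian)
    (hdet : ∀ x : ℝ, Matrix.det (x • (1 : Matrix n n ℝ) - S₁)
      = Matrix.det (x • (1 : Matrix n n ℝ) - S₂)) : ‖S₁‖ = ‖S₂‖ := by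
  rw [norm_hermitian_eigs h₁, norm_hermitian_eigs h₂]
  have key : ∀ (T₁ T₂ : Matrix n n ℝ) (hT₁ : T₁.IsHermitian) (hT₂ : T₂.IsHermitian),
      (∀ x : ℝ, Matrix.det (x • (1 : Matrix n n ℝ) - T₁)
        = Matrix.det (x • (1 : Matrix n n ℝ) - T₂)) →
      Finset.univ.sup' Finset.univ_nonempty (fun i => |hT₁.eigenvalues i|)
        ≤ Finset.univ.sup' Finset.univ_nonempty (fun i => |hT₂.eigenvalues i|) := by
    intro T₁ T₂ hT₁ hT₂ hd
    apply Finset.sup'_le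
    intro i _
    have h0 : Matrix.det ((hT₁.eigenvalues i) • (1 : Matrix n n ℝ) - T₂) = 0 := by
      rw [← hd, det_smul_one_sub_eq hT₁]
      exact Finset.prod_eq_zero (Finset.mem_univ i) (sub_self _)
    rw [det_smul_one_sub_eq hT₂] at h0
    obtain ⟨k, _, hk⟩ := Finset.prod_eq_zero_iff.mp h0
    have : hT₁.eigenvalues i = hT₂.eigenvalues k := by linarith [sub_eq_zero.mp hk]
    rw [this]
    exact Finset.le_sup' (fun i => |hT₂.eigenvalues i|) (Finset.mem_univ k)
  exact le_antisymm (key _ _ h₁ h₂ hdet) (key _ _ h₂ h₁ fun x => (hdet x).symm)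

lemma norm_one_sub_comm [Nonempty n] (A : Matrix n n ℝ) :
    ‖(1 : Matrix n n ℝ) - A * Aᵀ‖ = ‖(1 : Matrix n n ℝ) - Aᵀ * A‖ := by
  have h₁ : ((1 : Matrix n n ℝ) - A * Aᵀ).IsHermitian := by
    unfold Matrix.IsHermitian
    simp [Matrix.conjTranspose_eq_transpose_of_trivial, Matrix.transpose_sub,
      Matrix.transpose_mul, Matrix.transpose_one, Matrix.transpose_transpose]
  have h₂ : ((1 : Matrix n n ℝ) - Aᵀ * A).IsHermitian := by
    unfold Matrix.IsHermitian
    simp [Matrix.conjTranspose_eq_transpose_of_trivial, Matrix.transpose_sub,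
      Matrix.transpose_mul, Matrix.transpose_one, Matrix.transpose_transpose]
  apply norm_eq_of_det h₁ h₂
  intro x
  have hrw : ∀ M : Matrix n n ℝ,
      x • (1 : Matrix n n ℝ) - ((1 : Matrix n n ℝ) - M) = (x - 1) • (1 : Matrix n n ℝ) + M := by
    intro M
    rw [sub_smul, one_smul]
    abel
  rw [hrw, hrw, det_smul_add_comm]

lemma aeval_conj (W : Matrix n n ℝ) (hW1 : Wᵀ * W = 1) (hW2 : W * Wᵀ = 1)
    (d : n → ℝ) (p : Polynomial ℝ) :
    Polynomial.aeval (W * Matrix.diagonal d * Wᵀ) p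
      = W * Matrix.diagonal (fun i => p.eval (d i)) * Wᵀ := by
  have hpow : ∀ k : ℕ, (W * Matrix.diagonal d * Wᵀ) ^ k
      = W * (Matrix.diagonal d) ^ k * Wᵀ := by
    intro k
    induction k with
    | zero => rw [pow_zero, pow_zero, Matrix.mul_one, hW2]
    | succ k ih =>
        rw [pow_succ, ih, pow_succ]
        calc W * (Matrix.diagonal d) ^ k * Wᵀ * (W * Matrix.diagonal d * Wᵀ)
            = W * (Matrix.diagonal d) ^ k * (Wᵀ * W) * Matrix.diagonal d * Wᵀ := by
              simp only [Matrix.mul_assoc]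
          _ = W * ((Matrix.diagonal d) ^ k * Matrix.diagonal d) * Wᵀ := by
              rw [hW1, Matrix.mul_one]
              simp only [Matrix.mul_assoc]
  induction p using Polynomial.induction_on' with
  | add f g hf hg =>
      rw [map_add, hf, hg]
      have : (Matrix.diagonal fun i => Polynomial.eval (d i) (f + g))
          = Matrix.diagonal (fun i => f.eval (d i)) + Matrix.diagonal (fun i => g.eval (d i)) := by
        have hfun : (fun i => Polynomial.eval (d i) (f + g))
            = (fun i => f.eval (d i)) + (fun i => g.eval (d i)) := by
          funext i; simp [Polynomial.eval_add]
        rw [hfun, Matrix.diagonal_add]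
        rfl
      rw [this, Matrix.mul_add, Matrix.add_mul]
  | monomial k a =>
      rw [Polynomial.aeval_monomial, hpow, Algebra.algebraMap_eq_smul_one]
      have : (Matrix.diagonal fun i => Polynomial.eval (d i) ((Polynomial.monomial k) a))
          = a • (Matrix.diagonal d) ^ k := by
        rw [Matrix.diagonal_pow]
        have : (fun i => Polynomial.eval (d i) ((Polynomial.monomial k) a)) = a • (d ^ k) := by
          funext i
          simp [Polynomial.eval_monomial]
        rw [this, Matrix.diagonal_smul]
      rw [this, Matrix.mul_smul, Matrix.smul_mul, smul_mul_assoc, Matrix.one_mul]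

end helpers

set_option maxHeartbeats 2000000 in
/-- Extended Davis–Kahan theorem with a polynomial transform, interval
choice (10) (i.e. `a₂ = ψ_{j+1}`, `b₂ = ψ_{j+r}`), spectral-norm version.
Eigenvalues are 1-indexed in the paper; here `φ ⟨k-1⟩` plays the role of `φ_k`. -/
theorem stmt_11 (n j r : ℕ) (hj : 1 ≤ j) (hr : 1 ≤ r) (hn : j + r + 1 ≤ n)
    (Φ Ψ W V : Matrix (Fin n) (Fin n) ℝ)
    (φ ψ : Fin n → ℝ) (hφmono : Monotone φ) (hψmono : Monotone ψ)
    (hW : Wᵀ * W = 1 ∧ W * Wᵀ = 1) (hV : Vᵀ * V = 1 ∧ V * Vᵀ = 1)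
    (hΦ : Φ = W * Matrix.diagonal φ * Wᵀ) (hΨ : Ψ = V * Matrix.diagonal ψ * Vᵀ)
    (hgapφ1 : φ ⟨j - 1, by omega⟩ < φ ⟨j, by omega⟩)
    (hgapφ2 : φ ⟨j + r - 1, by omega⟩ < φ ⟨j + r, by omega⟩)
    (hgapψ1 : ψ ⟨j - 1, by omega⟩ < ψ ⟨j, by omega⟩)
    (hgapψ2 : ψ ⟨j + r - 1, by omega⟩ < ψ ⟨j + r, by omega⟩)
    (p : Polynomial ℝ) (a₂ b₂ δ₂ : ℝ)
    (ha₂ : a₂ = ψ ⟨j, by omega⟩) (hb₂ : b₂ = ψ ⟨j + r - 1, by omega⟩)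
    (hδ₂pos : 0 < δ₂)
    (houtside : ∀ l : Fin n, (l.val < j ∨ j + r ≤ l.val) →
        b₂ + δ₂ ≤ p.eval (φ l) ∨ p.eval (φ l) ≤ a₂ - δ₂)
    (hinside : ∀ k : Fin r, a₂ - p.eval (φ ⟨j + k, by omega⟩) < δ₂ ∧
        p.eval (φ ⟨j + k, by omega⟩) - b₂ < δ₂)
    (Wj Vj : Matrix (Fin n) (Fin r) ℝ)
    (hWj : Wj = Matrix.of fun i (k : Fin r) => W i ⟨j + k, by omega⟩)
    (hVj : Vj = Matrix.of fun i (k : Fin r) => V i ⟨j + k, by omega⟩) :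
    specNorm (Wj * Wjᵀ * (1 - Vj * Vjᵀ)) ≤ specNorm ((Polynomial.aeval Φ) p - Ψ) / δ₂ := by
  haveI : Nonempty (Fin n) := ⟨⟨0, by omega⟩⟩
  haveI : Nonempty (Fin r) := ⟨⟨0, by omega⟩⟩
  obtain ⟨hW1, hW2⟩ := hW
  obtain ⟨hV1, hV2⟩ := hV
  set E : Matrix (Fin n) (Fin n) ℝ := (Polynomial.aeval Φ) p - Ψ with hE
  rw [specNorm_eq, specNorm_eq]
  -- index indicator
  set ind : Fin n → ℝ := fun i => if j ≤ i.val ∧ i.val < j + r then 1 else 0 with hind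
  set indC : Fin n → ℝ := fun i => if j ≤ i.val ∧ i.val < j + r then 0 else 1 with hindC
  set PB : Matrix (Fin n) (Fin n) ℝ := Matrix.diagonal ind with hPB
  set PC : Matrix (Fin n) (Fin n) ℝ := Matrix.diagonal indC with hPC
  -- summation reindexing
  have hsum : ∀ f : Fin n → ℝ,
      (∑ i : Fin n, if j ≤ i.val ∧ i.val < j + r then f i else 0)
        = ∑ k : Fin r, f ⟨j + k.val, by omega⟩ := by
    intro f
    rw [← Finset.sum_filter]
    have hemb : Function.Injective (fun k : Fin r => (⟨j + k.val, by omega⟩ : Fin n)) := by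
      intro a b hab
      have := congrArg Fin.val hab
      simp only at this
      exact Fin.ext (by omega)
    rw [show (Finset.univ.filter (fun i : Fin n => j ≤ i.val ∧ i.val < j + r))
        = Finset.univ.map ⟨fun k : Fin r => ⟨j + k.val, by omega⟩, hemb⟩ from ?_]
    · rw [Finset.sum_map]
      rfl
    · ext i
      simp only [Finset.mem_filter, Finset.mem_univ, true_and, Finset.mem_map,
        Function.Embedding.coeFn_mk]
      constructor
      · rintro ⟨h1, h2⟩
        exact ⟨⟨i.val - j, by omega⟩, Fin.ext (by simp; omega)⟩
      · rintro ⟨k, rfl⟩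
        constructor <;> simp <;> omega
  -- projections via full matrices
  have hPBW : Wj * Wjᵀ = W * PB * Wᵀ := by
    ext x y
    have hrhs : (W * PB * Wᵀ) x y
        = ∑ i : Fin n, if j ≤ i.val ∧ i.val < j + r then W x i * W y i else 0 := by
      rw [Matrix.mul_apply]
      apply Finset.sum_congr rfl
      intro i _
      rw [Matrix.mul_diagonal, Matrix.transpose_apply, hind]
      by_cases h : j ≤ i.val ∧ i.val < j + r <;> simp [h]
    rw [hrhs, hsum fun i => W x i * W y i, Matrix.mul_apply]
    apply Finset.sum_congr rfl
    intro k _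
    rw [hWj]
    rfl
  have hPBV : Vj * Vjᵀ = V * PB * Vᵀ := by
    ext x y
    have hrhs : (V * PB * Vᵀ) x y
        = ∑ i : Fin n, if j ≤ i.val ∧ i.val < j + r then V x i * V y i else 0 := by
      rw [Matrix.mul_apply]
      apply Finset.sum_congr rfl
      intro i _
      rw [Matrix.mul_diagonal, Matrix.transpose_apply, hind]
      by_cases h : j ≤ i.val ∧ i.val < j + r <;> simp [h]
    rw [hrhs, hsum fun i => V x i * V y i, Matrix.mul_apply]
    apply Finset.sum_congr rfl
    intro k _
    rw [hVj]
    rfl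
  have hentry : ∀ (U : Matrix (Fin n) (Fin n) ℝ), Uᵀ * U = 1 →
      ∀ (Uj : Matrix (Fin n) (Fin r) ℝ),
      (Uj = Matrix.of fun i (k : Fin r) => U i ⟨j + k, by omega⟩) → Ujᵀ * Uj = 1 := by
    intro U hU1 Uj hUj
    ext k k'
    have h1 : ∀ a b : Fin n, (Uᵀ * U) a b = (1 : Matrix (Fin n) (Fin n) ℝ) a b := by
      intro a b; rw [hU1]
    have h2 := h1 ⟨j + k.val, by omega⟩ ⟨j + k'.val, by omega⟩
    rw [Matrix.mul_apply] at h2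
    rw [Matrix.mul_apply]
    have h3 : ∑ x, (Ujᵀ) k x * Uj x k' = ∑ x, (Uᵀ) ⟨j + k.val, by omega⟩ x * U x ⟨j + k'.val, by omega⟩ := by
      apply Finset.sum_congr rfl
      intro x _
      rw [hUj, Matrix.transpose_apply, Matrix.transpose_apply]
      rfl
    rw [h3, h2, Matrix.one_apply, Matrix.one_apply]
    have : ((⟨j + k.val, by omega⟩ : Fin n) = ⟨j + k'.val, by omega⟩) ↔ k = k' := by
      constructor
      · intro h; exact Fin.ext (by have := congrArg Fin.val h; simp only at this; omega)
      · rintro rfl; rfl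
    split_ifs with u1 u2 u3 <;> first | rfl | (exfalso; tauto)
  have hWjO : Wjᵀ * Wj = 1 := hentry W hW1 Wj hWj
  have hVjO : Vjᵀ * Vj = 1 := hentry V hV1 Vj hVj
  -- the transformed difference matrix
  set O : Matrix (Fin n) (Fin n) ℝ := Wᵀ * V with hO
  set dp : Fin n → ℝ := fun i => p.eval (φ i) with hdp
  have hEform : Wᵀ * E * V = Matrix.diagonal dp * O - O * Matrix.diagonal ψ := by
    rw [hE, hΦ, hΨ, aeval_conj W hW1 hW2 φ p]
    rw [Matrix.mul_sub, Matrix.sub_mul]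
    congr 1
    · calc Wᵀ * (W * Matrix.diagonal dp * Wᵀ) * V
          = (Wᵀ * W) * Matrix.diagonal dp * (Wᵀ * V) := by simp only [Matrix.mul_assoc]
        _ = Matrix.diagonal dp * O := by rw [hW1, Matrix.one_mul, hO]
    · calc Wᵀ * (V * Matrix.diagonal ψ * Vᵀ) * V
          = (Wᵀ * V) * Matrix.diagonal ψ * (Vᵀ * V) := by simp only [Matrix.mul_assoc]
        _ = O * Matrix.diagonal ψ := by rw [hV1, Matrix.mul_one, hO]
  -- interval data
  set m0 : ℝ := (a₂ + b₂) / 2 with hm0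
  set ρ : ℝ := (b₂ - a₂) / 2 with hρdef
  have hab : a₂ ≤ b₂ := by
    rw [ha₂, hb₂]
    exact hψmono (Fin.mk_le_mk.mpr (by omega))
  have hρ : 0 ≤ ρ := by rw [hρdef]; linarith
  set α : Fin n → ℝ := fun i => if j ≤ i.val ∧ i.val < j + r then ρ + δ₂
    else p.eval (φ i) - m0 with hαdef
  set β : Fin n → ℝ := fun i => if j ≤ i.val ∧ i.val < j + r then ψ i - m0 else 0 with hβdef
  have hα : ∀ i, ρ + δ₂ ≤ |α i| := by
    intro i
    simp only [hαdef]
    by_cases h : j ≤ i.val ∧ i.val < j + r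
    · rw [if_pos h, abs_of_nonneg (by linarith)]
    · rw [if_neg h]
      rcases houtside i (by omega) with h1 | h1
      · rw [abs_of_nonneg (by linarith [hρdef, hm0])]
        linarith [hρdef, hm0]
      · rw [abs_of_nonpos (by linarith [hρdef, hm0])]
        linarith [hρdef, hm0]
  have hβ : ∀ i, |β i| ≤ ρ := by
    intro i
    simp only [hβdef]
    by_cases h : j ≤ i.val ∧ i.val < j + r
    · rw [if_pos h]
      have h1 : a₂ ≤ ψ i := by
        rw [ha₂]
        have : (⟨j, by omega⟩ : Fin n) ≤ i := by rw [Fin.le_def]; exact h.1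
        exact hψmono this
      have h2 : ψ i ≤ b₂ := by
        rw [hb₂]
        have : i ≤ (⟨j + r - 1, by omega⟩ : Fin n) := by rw [Fin.le_def]; simp; omega
        exact hψmono this
      rw [abs_le]
      constructor <;> linarith [hρdef, hm0]
    · rw [if_neg h]
      simpa using hρ
  have hαpos : 0 < ρ + δ₂ := by linarith
  have hαne : ∀ i, α i ≠ 0 := by
    intro i hzero
    have := hα i
    rw [hzero, abs_zero] at this
    linarith
  set M : Matrix (Fin n) (Fin n) ℝ := PC * O * PB with hM
  set N : Matrix (Fin n) (Fin n) ℝ := PC * (Wᵀ * E * V) * PB with hN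
  have hMsyl : Matrix.diagonal α * M - M * Matrix.diagonal β = N := by
    rw [hM, hN, hEform, hPC, hPB]
    ext l k
    simp only [Matrix.sub_apply, Matrix.diagonal_mul, Matrix.mul_diagonal]
    simp only [hαdef, hβdef, hindC, hind, hdp]
    by_cases hl : j ≤ l.val ∧ l.val < j + r <;>
      by_cases hk : j ≤ k.val ∧ k.val < j + r <;>
      simp [hl, hk] <;> ring

  -- inverse diagonal and one-step Sylvester bound
  set Dinv : Matrix (Fin n) (Fin n) ℝ := Matrix.diagonal (fun i => (α i)⁻¹) with hDinvdef
  have hDinv : Dinv * Matrix.diagonal α = 1 := by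
    rw [hDinvdef, Matrix.diagonal_mul_diagonal]
    have : (fun i => (α i)⁻¹ * α i) = fun _ => (1:ℝ) := by
      funext i; exact inv_mul_cancel₀ (hαne i)
    rw [this, Matrix.diagonal_one]
  have hMrep : M = Dinv * (N + M * Matrix.diagonal β) := by
    have h1 : Matrix.diagonal α * M = N + M * Matrix.diagonal β := by
      rw [← hMsyl]; abel
    calc M = 1 * M := (Matrix.one_mul M).symm
      _ = Dinv * Matrix.diagonal α * M := by rw [hDinv]
      _ = Dinv * (Matrix.diagonal α * M) := by rw [Matrix.mul_assoc]
      _ = Dinv * (N + M * Matrix.diagonal β) := by rw [h1]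
  have hDinvnorm : ‖Dinv‖ ≤ (ρ + δ₂)⁻¹ := by
    rw [hDinvdef]
    refine norm_diagonal_le _ (by positivity) fun i => ?_
    rw [abs_inv]
    exact inv_anti₀ hαpos (hα i)
  have hβnorm : ‖Matrix.diagonal β‖ ≤ ρ := norm_diagonal_le _ hρ hβ
  have hWtEV : ‖Wᵀ * E * V‖ = ‖E‖ := by
    have h := norm_mul_orth (U := Wᵀ) (Vv := Vᵀ) E
      (by rw [Matrix.transpose_transpose, hW2]) (by rw [Matrix.transpose_transpose, hV2])
    rwa [Matrix.transpose_transpose] at h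
  have hPCnorm : ‖PC‖ ≤ 1 := by
    rw [hPC]
    refine norm_diagonal_le _ zero_le_one fun i => ?_
    simp only [hindC]
    split_ifs <;> simp
  have hPBnorm : ‖PB‖ ≤ 1 := by
    rw [hPB]
    refine norm_diagonal_le _ zero_le_one fun i => ?_
    simp only [hind]
    split_ifs <;> simp
  have hNnorm : ‖N‖ ≤ ‖E‖ := by
    rw [hN]
    calc ‖PC * (Wᵀ * E * V) * PB‖ ≤ ‖PC * (Wᵀ * E * V)‖ * ‖PB‖ := Matrix.l2_opNorm_mul _ _
      _ ≤ ‖PC * (Wᵀ * E * V)‖ * 1 := by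
          apply mul_le_mul_of_nonneg_left hPBnorm (norm_nonneg _)
      _ = ‖PC * (Wᵀ * E * V)‖ := mul_one _
      _ ≤ ‖PC‖ * ‖Wᵀ * E * V‖ := Matrix.l2_opNorm_mul _ _
      _ ≤ 1 * ‖Wᵀ * E * V‖ := by
          apply mul_le_mul_of_nonneg_right hPCnorm (norm_nonneg _)
      _ = ‖E‖ := by rw [one_mul, hWtEV]
  have hMbound : ‖M‖ ≤ ‖E‖ / δ₂ := by
    have h2 : ‖M‖ ≤ (ρ + δ₂)⁻¹ * (‖N‖ + ‖M‖ * ρ) := by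
      calc ‖M‖ = ‖Dinv * (N + M * Matrix.diagonal β)‖ := by rw [← hMrep]
        _ ≤ ‖Dinv‖ * ‖N + M * Matrix.diagonal β‖ := Matrix.l2_opNorm_mul _ _
        _ ≤ (ρ + δ₂)⁻¹ * ‖N + M * Matrix.diagonal β‖ := by
            apply mul_le_mul_of_nonneg_right hDinvnorm (norm_nonneg _)
        _ ≤ (ρ + δ₂)⁻¹ * (‖N‖ + ‖M * Matrix.diagonal β‖) := by
            apply mul_le_mul_of_nonneg_left (norm_add_le _ _) (by positivity)
        _ ≤ (ρ + δ₂)⁻¹ * (‖N‖ + ‖M‖ * ‖Matrix.diagonal β‖) := by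
            apply mul_le_mul_of_nonneg_left
              (add_le_add_right (Matrix.l2_opNorm_mul _ _) _) (by positivity)
        _ ≤ (ρ + δ₂)⁻¹ * (‖N‖ + ‖M‖ * ρ) := by
            apply mul_le_mul_of_nonneg_left
              (add_le_add_right (mul_le_mul_of_nonneg_left hβnorm (norm_nonneg _)) _) (by positivity)
    have h3 : (ρ + δ₂) * ‖M‖ ≤ ‖N‖ + ‖M‖ * ρ := by
      have h4 := mul_le_mul_of_nonneg_left h2 hαpos.le
      rwa [← mul_assoc, mul_inv_cancel₀ (ne_of_gt hαpos), one_mul] at h4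
    rw [le_div_iff₀ hδ₂pos]
    nlinarith [h3, hNnorm]
  -- relating the two sinΘ blocks
  have hPCsum : PC + PB = 1 := by
    rw [hPC, hPB]
    ext x y
    by_cases h : x = y
    · subst h
      simp only [Matrix.add_apply, Matrix.diagonal_apply_eq, hindC, hind, Matrix.one_apply_eq]
      split_ifs <;> norm_num
    · simp [Matrix.diagonal_apply_ne _ h, Matrix.one_apply_ne h]
  have h1mP : (1 : Matrix (Fin n) (Fin n) ℝ) - Wj * Wjᵀ = W * PC * Wᵀ := by
    rw [hPBW]
    have hadd : W * PC * Wᵀ + W * PB * Wᵀ = 1 := by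
      calc W * PC * Wᵀ + W * PB * Wᵀ = W * (PC + PB) * Wᵀ := by
            rw [Matrix.mul_add, Matrix.add_mul]
        _ = 1 := by rw [hPCsum, Matrix.mul_one, hW2]
    exact (eq_sub_of_add_eq hadd).symm
  have hSdef : ((1 : Matrix (Fin n) (Fin n) ℝ) - Wj * Wjᵀ) * (Vj * Vjᵀ) = W * M * Vᵀ := by
    rw [h1mP, hPBV, hM]
    calc W * PC * Wᵀ * (V * PB * Vᵀ) = W * (PC * (Wᵀ * V) * PB) * Vᵀ := by
          simp only [Matrix.mul_assoc]
      _ = W * (PC * O * PB) * Vᵀ := by rw [← hO]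
  have hSnorm : ‖((1 : Matrix (Fin n) (Fin n) ℝ) - Wj * Wjᵀ) * (Vj * Vjᵀ)‖ = ‖M‖ := by
    rw [hSdef]
    exact norm_mul_orth M hW1 hV1
  have hsq1 := sq_norm_proj Wj Vj hWjO hVjO
  have hsq2 := sq_norm_proj Vj Wj hVjO hWjO
  have hAA : ((Vjᵀ * Wj)ᵀ * (Vjᵀ * Wj)) = (Wjᵀ * Vj) * (Wjᵀ * Vj)ᵀ := by
    simp [Matrix.transpose_mul, Matrix.transpose_transpose]
  have hcomm : ‖(1 : Matrix (Fin r) (Fin r) ℝ) - (Wjᵀ * Vj) * (Wjᵀ * Vj)ᵀ‖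
      = ‖(1 : Matrix (Fin r) (Fin r) ℝ) - (Wjᵀ * Vj)ᵀ * (Wjᵀ * Vj)‖ :=
    norm_one_sub_comm (Wjᵀ * Vj)
  have hTtrans : ‖Wj * Wjᵀ * (1 - Vj * Vjᵀ)‖ = ‖(1 - Vj * Vjᵀ) * (Wj * Wjᵀ)‖ := by
    have hT : (Wj * Wjᵀ * (1 - Vj * Vjᵀ))ᵀ = (1 - Vj * Vjᵀ) * (Wj * Wjᵀ) := by
      simp [Matrix.transpose_mul, Matrix.transpose_sub, Matrix.transpose_one,
        Matrix.transpose_transpose, Matrix.mul_assoc]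
    rw [← hT, normT]
  have hTS : ‖Wj * Wjᵀ * (1 - Vj * Vjᵀ)‖ = ‖M‖ := by
    have e1 : ‖Wj * Wjᵀ * (1 - Vj * Vjᵀ)‖ * ‖Wj * Wjᵀ * (1 - Vj * Vjᵀ)‖
        = ‖M‖ * ‖M‖ := by
      rw [hTtrans]
      rw [← hSnorm]
      calc ‖(1 - Vj * Vjᵀ) * (Wj * Wjᵀ)‖ * ‖(1 - Vj * Vjᵀ) * (Wj * Wjᵀ)‖
          = ‖(1 : Matrix (Fin r) (Fin r) ℝ) - (Vjᵀ * Wj)ᵀ * (Vjᵀ * Wj)‖ := hsq2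
        _ = ‖(1 : Matrix (Fin r) (Fin r) ℝ) - (Wjᵀ * Vj)ᵀ * (Wjᵀ * Vj)‖ := by
            rw [hAA] at *
            rw [← hAA, hAA, hcomm]
        _ = ‖((1 : Matrix (Fin n) (Fin n) ℝ) - Wj * Wjᵀ) * (Vj * Vjᵀ)‖
            * ‖((1 : Matrix (Fin n) (Fin n) ℝ) - Wj * Wjᵀ) * (Vj * Vjᵀ)‖ := hsq1.symm
    rcases mul_self_eq_mul_self_iff.mp e1 with h | h
    · exact h
    · have := norm_nonneg (Wj * Wjᵀ * (1 - Vj * Vjᵀ))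
      have := norm_nonneg M
      linarith
  rw [hTS]
  exact hMbound
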